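/- Let 2 < γ < 3, ψ(x) = x^{-1/(γ-1)} on (0,1], and g(x) = ∫₀¹ ψ(b)(1 − exp(−x ψ(b))) db. Then for every θ > 0 the equation A = θ g(A) has a unique solution A_θ > 0; i.e., the critical value of θ is 0 when 2 < γ < 3. -/

import Mathlib

/-!
Since `ψ` is integrable (`γ > 2`), `g` is continuous and bounded by `∫ ψ`, so `θ g(A) < A` for
large `A`. Since `(1 - e^{-t}) / t` is strictly decreasing, so is `g(x) / x`, which gives
uniqueness. Since `ψ²` is not integrable (`γ < 3`), Fatou's lemma shows that `g(x) / x` is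
unbounded as `x → 0⁺`, so `x < θ g(x)` for some small `x`, and the intermediate value theorem
gives existence.
-/

open MeasureTheory Filter Set Real Topology

theorem mul_one_sub_exp_neg_lt_mul {a b : ℝ} (ha : 0 < a) (hab : a < b) :
    a * (1 - exp (-b)) < b * (1 - exp (-a)) := by
  have hb : 0 < b := ha.trans hab
  have hconv := strictConvexOn_exp.2 (mem_univ (-b)) (mem_univ 0) (by linarith)
    (div_pos ha hb) (sub_pos.2 ((div_lt_one hb).2 hab)) (add_sub_cancel _ _)
  have hmid : (a / b) • -b + (1 - a / b) • (0 : ℝ) = -a := by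
    rw [smul_eq_mul, smul_zero, add_zero]; field_simp
  rw [hmid, smul_eq_mul, smul_eq_mul, exp_zero] at hconv
  have key : b * exp (-a) < a * exp (-b) + (b - a) := by
    calc b * exp (-a) < b * (a / b * exp (-b) + (1 - a / b) * 1) := by gcongr
      _ = a * exp (-b) + (b - a) := by field_simp
  linarith

theorem min_one_div_two_le_one_sub_exp_neg {s : ℝ} (hs : 0 ≤ s) :
    min s 1 / 2 ≤ 1 - exp (-s) := by
  have h1s : 0 < 1 + s := by linarith
  have hexp : exp (-s) ≤ (1 + s)⁻¹ := by
    rw [exp_neg]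
    exact inv_anti₀ h1s (by linarith [add_one_le_exp s])
  have hfrac : min s 1 / 2 ≤ 1 - (1 + s)⁻¹ := by
    rw [le_sub_iff_add_le, ← le_sub_iff_add_le', inv_le_iff_one_le_mul₀ h1s]
    rcases le_total s 1 with h | h
    · rw [min_eq_left h]; nlinarith
    · rw [min_eq_right h]; nlinarith
  linarith

theorem mul_min_le_two_mul_mul_one_sub_exp_neg {t N : ℝ} (ht : 0 ≤ t) (hN : 0 < N) :
    t * min t N ≤ 2 * N * (t * (1 - exp (-N⁻¹ * t))) := by
  have hmin : min (N⁻¹ * t) 1 = N⁻¹ * min t N := by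
    rw [mul_min_of_nonneg _ _ (inv_nonneg.2 hN.le), inv_mul_cancel₀ hN.ne']
  have hhalf := min_one_div_two_le_one_sub_exp_neg (mul_nonneg (inv_nonneg.2 hN.le) ht)
  rw [hmin, ← neg_mul] at hhalf
  calc t * min t N = 2 * N * (t * (N⁻¹ * min t N / 2)) := by field_simp
    _ ≤ 2 * N * (t * (1 - exp (-N⁻¹ * t))) := by gcongr

theorem integral_pos_of_ae_pos {α : Type*} [MeasurableSpace α] {μ : Measure α} [NeZero μ]
    {f : α → ℝ} (hfi : Integrable f μ) (hf : ∀ᵐ x ∂μ, 0 < f x) : 0 < ∫ x, f x ∂μ := by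
  rw [integral_pos_iff_support_of_nonneg_ae (hf.mono fun _ h => h.le) hfi]
  have hsupp : Function.support f =ᵐ[μ] univ := by
    rw [ae_eq_univ]
    simpa [Function.support, compl_ofPred] using ae_iff.1 (hf.mono fun _ h => h.ne')
  rw [measure_congr hsupp]
  exact Measure.measure_univ_pos.2 (NeZero.ne μ)

theorem mul_one_sub_exp_neg_mul_nonneg {t x : ℝ} (ht : 0 ≤ t) (hx : 0 ≤ x) :
    0 ≤ t * (1 - exp (-x * t)) :=
  mul_nonneg ht (sub_nonneg.2 (exp_le_one_iff.2 (by nlinarith)))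

theorem mul_one_sub_exp_neg_mul_le {t : ℝ} (ht : 0 ≤ t) (x : ℝ) :
    t * (1 - exp (-x * t)) ≤ t :=
  mul_le_of_le_one_right ht (sub_le_self _ (exp_pos _).le)

theorem norm_mul_one_sub_exp_neg_mul_le {t x : ℝ} (ht : 0 ≤ t) (hx : 0 ≤ x) :
    ‖t * (1 - exp (-x * t))‖ ≤ t := by
  rw [Real.norm_of_nonneg (mul_one_sub_exp_neg_mul_nonneg ht hx)]
  exact mul_one_sub_exp_neg_mul_le ht x

section

variable {α : Type*} [MeasurableSpace α] {μ : Measure α} {ψ : α → ℝ}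

noncomputable def chungLuG (μ : Measure α) (ψ : α → ℝ) (x : ℝ) : ℝ :=
  ∫ b, ψ b * (1 - exp (-x * ψ b)) ∂μ

theorem integrable_mul_one_sub_exp_neg_mul (hψ : Integrable ψ μ) (hψ0 : 0 ≤ᵐ[μ] ψ)
    {x : ℝ} (hx : 0 ≤ x) : Integrable (fun b => ψ b * (1 - exp (-x * ψ b))) μ := by
  refine hψ.mono' ?_ (hψ0.mono fun _ hb => norm_mul_one_sub_exp_neg_mul_le hb hx)
  exact (by fun_prop : Continuous fun t => t * (1 - exp (-x * t))).comp_aestronglyMeasurable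
    hψ.aestronglyMeasurable

theorem chungLuG_le_integral (hψ : Integrable ψ μ) (hψ0 : 0 ≤ᵐ[μ] ψ) {x : ℝ} (hx : 0 ≤ x) :
    chungLuG μ ψ x ≤ ∫ b, ψ b ∂μ :=
  integral_mono_ae (integrable_mul_one_sub_exp_neg_mul hψ hψ0 hx) hψ
    (hψ0.mono fun _ hb => mul_one_sub_exp_neg_mul_le hb x)

theorem continuousOn_chungLuG (hψ : Integrable ψ μ) (hψ0 : 0 ≤ᵐ[μ] ψ) :
    ContinuousOn (chungLuG μ ψ) (Ici 0) := by
  refine continuousOn_of_dominated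
    (fun x hx => (integrable_mul_one_sub_exp_neg_mul hψ hψ0 hx).aestronglyMeasurable)
    (fun x hx => hψ0.mono fun _ hb => norm_mul_one_sub_exp_neg_mul_le hb hx) hψ
    (ae_of_all _ fun b => ?_)
  exact (by fun_prop : Continuous fun x => ψ b * (1 - exp (-x * ψ b))).continuousOn

theorem strictAntiOn_chungLuG_div [NeZero μ] (hψ : Integrable ψ μ) (hψ0 : ∀ᵐ b ∂μ, 0 < ψ b) :
    StrictAntiOn (fun x => chungLuG μ ψ x / x) (Ioi 0) := by
  have hψ0' : 0 ≤ᵐ[μ] ψ := hψ0.mono fun _ hb => hb.le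
  intro P hP Q hQ hPQ
  rw [div_lt_div_iff₀ hQ hP]
  have hpos := integral_pos_of_ae_pos
    (f := fun b => ψ b * (1 - exp (-P * ψ b)) * Q - ψ b * (1 - exp (-Q * ψ b)) * P)
    (((integrable_mul_one_sub_exp_neg_mul hψ hψ0' hP.le).mul_const Q).sub
      ((integrable_mul_one_sub_exp_neg_mul hψ hψ0' hQ.le).mul_const P))
    (hψ0.mono fun b hb => by
      have := mul_one_sub_exp_neg_lt_mul (mul_pos hP hb) (mul_lt_mul_of_pos_right hPQ hb)
      simp only [neg_mul] at this ⊢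
      linarith)
  rw [integral_sub ((integrable_mul_one_sub_exp_neg_mul hψ hψ0' hP.le).mul_const Q)
      ((integrable_mul_one_sub_exp_neg_mul hψ hψ0' hQ.le).mul_const P),
    integral_mul_const, integral_mul_const] at hpos
  unfold chungLuG
  linarith

theorem integrable_sq_of_chungLuG_le_mul (hψ : Integrable ψ μ) (hψ0 : 0 ≤ᵐ[μ] ψ) {c : ℝ}
    (hG : ∀ x > 0, chungLuG μ ψ x ≤ c * x) : Integrable (fun b => ψ b ^ 2) μ := by
  -- Fatou's lemma for the truncations `ψ · min ψ (n + 1)`, whose integrals are `≤ 2c`.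
  set F : ℕ → α → ℝ := fun n b => ψ b * min (ψ b) (n + 1)
  have hF_meas : ∀ n, AEStronglyMeasurable (F n) μ := fun n =>
    (by fun_prop : Continuous fun t : ℝ => t * min t (n + 1)).comp_aestronglyMeasurable
      hψ.aestronglyMeasurable
  have hF_le : ∀ n : ℕ, ∀ᵐ b ∂μ, ‖F n b‖ₑ ≤
      ENNReal.ofReal (2 * (n + 1) * (ψ b * (1 - exp (-(n + 1 : ℝ)⁻¹ * ψ b)))) := by
    intro n
    filter_upwards [hψ0] with b hb
    have hN : (0 : ℝ) < n + 1 := by positivity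
    rw [Real.enorm_eq_ofReal (mul_nonneg hb (le_min hb hN.le))]
    exact ENNReal.ofReal_le_ofReal (mul_min_le_two_mul_mul_one_sub_exp_neg hb hN)
  have hlint : ∀ n : ℕ, ∫⁻ b, ‖F n b‖ₑ ∂μ ≤ ENNReal.ofReal (2 * c) := by
    intro n
    have hN : (0 : ℝ) < n + 1 := by positivity
    have hint := integrable_mul_one_sub_exp_neg_mul hψ hψ0 (inv_nonneg.2 hN.le)
    calc ∫⁻ b, ‖F n b‖ₑ ∂μ
        ≤ ∫⁻ b, ENNReal.ofReal (2 * (n + 1) * (ψ b * (1 - exp (-(n + 1 : ℝ)⁻¹ * ψ b)))) ∂μ :=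
          lintegral_mono_ae (hF_le n)
      _ = ENNReal.ofReal (2 * (n + 1) * chungLuG μ ψ (n + 1 : ℝ)⁻¹) := by
          rw [← ofReal_integral_eq_lintegral_ofReal (hint.const_mul _)
            (hψ0.mono fun b hb => mul_nonneg (by positivity)
              (mul_one_sub_exp_neg_mul_nonneg hb (inv_nonneg.2 hN.le))),
            integral_const_mul]
          rfl
      _ ≤ ENNReal.ofReal (2 * c) := by
          refine ENNReal.ofReal_le_ofReal ?_
          calc 2 * (n + 1) * chungLuG μ ψ (n + 1 : ℝ)⁻¹
              ≤ 2 * (n + 1) * (c * (n + 1 : ℝ)⁻¹) := by gcongr; exact hG _ (inv_pos.2 hN)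
            _ = 2 * c := by field_simp
  have htendsto : ∀ b, Tendsto (fun n => F n b) atTop (𝓝 (ψ b ^ 2)) := by
    intro b
    refine tendsto_const_nhds.congr' (eventually_atTop.2 ⟨⌈ψ b⌉₊, fun n hn => ?_⟩)
    have : ψ b ≤ n + 1 := by
      have := (Nat.le_ceil (ψ b)).trans (Nat.cast_le.2 hn)
      linarith
    simp only [F, min_eq_left this, sq]
  refine ⟨hψ.aestronglyMeasurable.pow 2, ?_⟩
  calc ∫⁻ b, ‖ψ b ^ 2‖ₑ ∂μ = ∫⁻ b, liminf (fun n => ‖F n b‖ₑ) atTop ∂μ :=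
        lintegral_congr fun b => ((htendsto b).enorm.liminf_eq).symm
    _ ≤ liminf (fun n => ∫⁻ b, ‖F n b‖ₑ ∂μ) atTop :=
        lintegral_liminf_le' fun n => (hF_meas n).aemeasurable.enorm
    _ ≤ ENNReal.ofReal (2 * c) := liminf_le_of_frequently_le' (Frequently.of_forall hlint)
    _ < ⊤ := ENNReal.ofReal_lt_top

theorem exists_lt_mul_chungLuG (hψ : Integrable ψ μ) (hψ0 : 0 ≤ᵐ[μ] ψ)
    (hsq : ¬ Integrable (fun b => ψ b ^ 2) μ) {θ : ℝ} (hθ : 0 < θ) :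
    ∃ x > 0, x < θ * chungLuG μ ψ x := by
  by_contra! h
  exact hsq (integrable_sq_of_chungLuG_le_mul hψ hψ0 fun x hx => (le_inv_mul_iff₀ hθ).2 (h x hx))

end

theorem existsUnique_pos_eq_mul_of_strictAntiOn_div {G : ℝ → ℝ} {θ C : ℝ} (hθ : 0 < θ)
    (hcont : ContinuousOn G (Ioi 0)) (hle : ∀ x > 0, G x ≤ C)
    (hanti : StrictAntiOn (fun x => G x / x) (Ioi 0)) (hsmall : ∃ x > 0, x < θ * G x) :
    ∃! A, 0 < A ∧ A = θ * G A := by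
  obtain ⟨ε, hε, hεG⟩ := hsmall
  set M := max ε (θ * C) + 1
  have hεM : ε ≤ M := by linarith [le_max_left ε (θ * C)]
  have hM : θ * G M < M := by
    nlinarith [le_max_right ε (θ * C), hle M (by linarith)]
  obtain ⟨A, hA, hAfix⟩ : ∃ A ∈ Icc ε M, θ * G A - A = 0 := by
    refine intermediate_value_Icc' hεM ?_ ⟨by linarith, by linarith⟩
    exact (continuousOn_const.mul (hcont.mono fun x hx => hε.trans_le hx.1)).sub continuousOn_id
  have hA0 : 0 < A := hε.trans_le hA.1
  have hslope : ∀ x ≠ 0, x = θ * G x → G x / x = θ⁻¹ := fun x hx hfix => by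
    field_simp; linarith
  refine ⟨A, ⟨hA0, by linarith⟩, fun B ⟨hB0, hBfix⟩ => hanti.injOn hB0 hA0 ?_⟩
  rw [hslope B hB0.ne' hBfix, hslope A hA0.ne' (by linarith)]

theorem integrableOn_rpow_neg_Ioc_zero_one {a : ℝ} (ha : a < 1) :
    IntegrableOn (fun b : ℝ => b ^ (-a)) (Ioc 0 1) :=
  (intervalIntegrable_iff_integrableOn_Ioc_of_le zero_le_one).1
    (intervalIntegral.intervalIntegrable_rpow' (by linarith))

theorem not_integrableOn_rpow_neg_sq_Ioc_zero_one {a : ℝ} (ha : 1 / 2 ≤ a) :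
    ¬ IntegrableOn (fun b : ℝ => (b ^ (-a)) ^ 2) (Ioc 0 1) := by
  intro h
  have h' : IntegrableOn (fun b : ℝ => b ^ (-a * 2)) (Ioo 0 1) :=
    (h.mono_set Ioo_subset_Ioc_self).congr_fun
      (fun b hb => by
        show (b ^ (-a)) ^ 2 = _
        rw [← rpow_natCast, ← rpow_mul hb.1.le, Nat.cast_ofNat]) measurableSet_Ioo
  rw [intervalIntegral.integrableOn_Ioo_rpow_iff one_pos] at h'
  linarith

/-- For `2 < γ < 3`, `ψ(x) = x^(-1/(γ-1))` and
`g(x) = ∫₀¹ ψ(b)(1 - exp(-x ψ(b))) db`, for every `θ > 0` the equation `A = θ g(A)`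
has a unique positive solution; i.e. the critical value of `θ` is `0`. -/
theorem chungLu_fixed_point_subcubic (γ : ℝ) (hγ2 : 2 < γ) (hγ3 : γ < 3)
    (ψ g : ℝ → ℝ)
    (hψ : ∀ x, ψ x = x ^ (-(1 / (γ - 1))))
    (hg : ∀ x, g x = ∫ b in (0:ℝ)..1, ψ b * (1 - Real.exp (-x * ψ b))) :
    ∀ θ : ℝ, 0 < θ → ∃! A : ℝ, 0 < A ∧ A = θ * g A := by
  intro θ hθ
  have hg' : g = chungLuG (volume.restrict (Ioc 0 1)) ψ := by
    ext x
    rw [hg, intervalIntegral.integral_of_le zero_le_one]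
    rfl
  have hint : IntegrableOn ψ (Ioc 0 1) := by
    rw [funext hψ]
    exact integrableOn_rpow_neg_Ioc_zero_one
      (show 1 / (γ - 1) < 1 by rw [div_lt_one (by linarith)]; linarith)
  have hsq : ¬ IntegrableOn (fun b => ψ b ^ 2) (Ioc 0 1) := by
    simp only [hψ]
    exact not_integrableOn_rpow_neg_sq_Ioc_zero_one
      (show 1 / 2 ≤ 1 / (γ - 1) by rw [div_le_div_iff₀ two_pos (by linarith)]; linarith)
  have hpos : ∀ᵐ b ∂volume.restrict (Ioc (0 : ℝ) 1), 0 < ψ b :=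
    (ae_restrict_iff' measurableSet_Ioc).2
      (ae_of_all _ fun b hb => hψ b ▸ rpow_pos_of_pos hb.1 _)
  have hnonneg : 0 ≤ᵐ[volume.restrict (Ioc (0 : ℝ) 1)] ψ := hpos.mono fun _ h => h.le
  have : NeZero (volume.restrict (Ioc (0 : ℝ) 1)) := ⟨by simp⟩
  rw [hg']
  exact existsUnique_pos_eq_mul_of_strictAntiOn_div hθ
    ((continuousOn_chungLuG hint hnonneg).mono Ioi_subset_Ici_self)
    (fun x hx => chungLuG_le_integral hint hnonneg hx.le)
    (strictAntiOn_chungLuG_div hint hpos)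
    (exists_lt_mul_chungLuG hint hnonneg hsq hθ)
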